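/- The pin group Pin(A₃) generated by Clifford multiplication of the 12 unit root vectors of A₃ in Cl(3) has order 48, and its even subgroup (the spin group) has order 24. -/

import Mathlib

noncomputable section
open CliffordAlgebra

/-- The quadratic form of Euclidean ℝ³. -/
def Q3 : QuadraticForm ℝ (Fin 3 → ℝ) :=
  QuadraticMap.weightedSumSquares ℝ (fun _ : Fin 3 => (1 : ℝ))

/-- The Clifford algebra Cl(3) of Euclidean ℝ³. -/
abbrev Cl3 := CliffordAlgebra Q3

/-- The orthonormal generators e₁, e₂, e₃ of Cl(3). -/
def e (i : Fin 3) : Cl3 := ι Q3 (Pi.single i 1)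

/-- The 12 unit root vectors `(±eᵢ ± eⱼ)/√2` of A₃, as grade-1 elements of Cl(3). -/
def A3rootVersors : Set Cl3 :=
  {x | ∃ i j : Fin 3, i < j ∧ ∃ s t : ℝ, (s = 1 ∨ s = -1) ∧ (t = 1 ∨ t = -1) ∧
        x = ι Q3 ((Real.sqrt 2)⁻¹ • (s • (Pi.single i 1 : Fin 3 → ℝ) + t • (Pi.single j 1 : Fin 3 → ℝ)))}

/-- Pin(A₃): the multiplicative group generated inside Cl(3) by the 12 unit root vectors of
A₃ under the geometric product (each generator is an involution, so the multiplicative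
closure is a group). -/
def PinA3 : Submonoid Cl3 := Submonoid.closure A3rootVersors

/-!
The product of two vectors `a`, `b` of ℝ³ in Cl(3) is the quaternion `a·b + a∧b` of the even
subalgebra `ℍ = span {1, e₀e₁, e₀e₂, e₂e₁}`. For two roots `u/√2`, `w/√2` it is half the integral
quaternion `u·w + u∧w`, so the products of two roots can be computed exactly in `ℍ[ℤ]`: they form
a set Spin(A₃) of 24 elements (the Hurwitz units, i.e. the binary tetrahedral group) containing 1
and closed under multiplication. Since the roots are involutions, Pin(A₃) is then Spin(A₃)
together with its coset `r₀ Spin(A₃)` for any root `r₀`; that coset is odd, hence disjoint from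
Spin(A₃), and has 24 elements since `x ↦ r₀ x` is injective.
-/

open Quaternion Pointwise

namespace Submonoid

variable {M : Type*} [Monoid M] {R : Set M}

theorem exists_mul_eq_one_of_mul_self_eq_one (h : ∀ r ∈ R, r * r = 1) {x : M}
    (hx : x ∈ closure R) : ∃ y ∈ closure R, x * y = 1 ∧ y * x = 1 := by
  induction hx using closure_induction with
  | mem r hr => exact ⟨r, subset_closure hr, h r hr, h r hr⟩
  | one => exact ⟨1, one_mem _, mul_one 1, mul_one 1⟩
  | mul a b _ _ iha ihb =>
    obtain ⟨a', ha', ha₁, ha₂⟩ := iha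
    obtain ⟨b', hb', hb₁, hb₂⟩ := ihb
    refine ⟨b' * a', mul_mem hb' ha', ?_, ?_⟩
    · rw [mul_assoc, ← mul_assoc b, hb₁, one_mul, ha₁]
    · rw [mul_assoc, ← mul_assoc a', ha₂, one_mul, hb₂]

theorem coe_closure_eq_union_image_mul_left {r₀ : M} (hr₀ : r₀ ∈ R)
    (h : ∀ r ∈ R, r * r = 1) (hone : 1 ∈ R * R) (hmul : R * R * (R * R) ⊆ R * R) :
    (closure R : Set M) = R * R ∪ (r₀ * ·) '' (R * R) := by
  have hr₀₀ : r₀ * r₀ = 1 := h r₀ hr₀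
  have mul_mem_sq {a b : M} (ha : a ∈ R * R) (hb : b ∈ R * R) : a * b ∈ R * R :=
    hmul (Set.mul_mem_mul ha hb)
  have conj_mem_sq {a : M} (ha : a ∈ R * R) : r₀ * a * r₀ ∈ R * R := by
    obtain ⟨r₁, hr₁, r₂, hr₂, rfl⟩ := ha
    rw [show r₀ * (r₁ * r₂) * r₀ = r₀ * r₁ * (r₂ * r₀) by simp only [mul_assoc]]
    exact mul_mem_sq (Set.mul_mem_mul hr₀ hr₁) (Set.mul_mem_mul hr₂ hr₀)
  let T : Submonoid M :=
    { carrier := R * R ∪ (r₀ * ·) '' (R * R)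
      one_mem' := Or.inl hone
      mul_mem' := by
        rintro _ _ (ha | ⟨a, ha, rfl⟩) (hb | ⟨b, hb, rfl⟩)
        · exact Or.inl (mul_mem_sq ha hb)
        · refine Or.inr ⟨r₀ * _ * r₀ * b, mul_mem_sq (conj_mem_sq ha) hb, ?_⟩
          simp only [← mul_assoc, hr₀₀, one_mul]
        · exact Or.inr ⟨a * _, mul_mem_sq ha hb, (mul_assoc _ _ _).symm⟩
        · refine Or.inl ?_
          rw [← mul_assoc]
          exact mul_mem_sq (conj_mem_sq ha) hb }
  have sq_subset : R * R ⊆ closure R := by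
    rintro _ ⟨a, ha, b, hb, rfl⟩
    exact mul_mem (subset_closure ha) (subset_closure hb)
  refine subset_antisymm (closure_le (S := T).mpr fun r hr => Or.inr ?_) ?_
  · exact ⟨r₀ * r, Set.mul_mem_mul hr₀ hr, by simp only [← mul_assoc, hr₀₀, one_mul]⟩
  · rintro _ (ha | ⟨a, ha, rfl⟩)
    · exact sq_subset ha
    · exact mul_mem (subset_closure hr₀) (sq_subset ha)

end Submonoid

lemma Q3_apply (v : Fin 3 → ℝ) : Q3 v = v 0 * v 0 + v 1 * v 1 + v 2 * v 2 := by
  simp [Q3, QuadraticMap.weightedSumSquares_apply, Fin.sum_univ_three]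

lemma ι_eq_sum_e (v : Fin 3 → ℝ) : ι Q3 v = v 0 • e 0 + v 1 • e 1 + v 2 • e 2 := by
  have hv : v = v 0 • Pi.single 0 1 + v 1 • Pi.single 1 1 + v 2 • Pi.single 2 1 := by
    ext i; fin_cases i <;> simp
  conv_lhs => rw [hv]
  simp only [map_add, map_smul, e]

lemma e_mul_self (i : Fin 3) : e i * e i = 1 := by
  rw [e, ι_sq_scalar, Q3_apply]
  fin_cases i <;> simp

lemma e_mul_e_eq_neg_of_lt {i j : Fin 3} (h : i < j) : e j * e i = -(e i * e j) := by
  have hpolar : QuadraticMap.polar Q3 (Pi.single j 1) (Pi.single i 1) = 0 := by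
    simp only [QuadraticMap.polar, Q3_apply]
    fin_cases i <;> fin_cases j <;> simp_all
  rw [eq_neg_iff_add_eq_zero, e, e, ι_mul_ι_add_swap, hpolar, map_zero]

lemma e_mul_e_mul_self (i : Fin 3) (x : Cl3) : e i * (e i * x) = x := by
  rw [← mul_assoc, e_mul_self, one_mul]

lemma e_mul_e_mul_eq_neg_of_lt {i j : Fin 3} (h : i < j) (x : Cl3) :
    e j * (e i * x) = -(e i * (e j * x)) := by
  rw [← mul_assoc, e_mul_e_eq_neg_of_lt h, neg_mul, mul_assoc]

def evenQuaternionBasis : QuaternionAlgebra.Basis Cl3 (-1 : ℝ) 0 (-1) where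
  i := e 0 * e 1
  j := e 0 * e 2
  k := e 2 * e 1
  i_mul_i := by
    simp (disch := decide) only [mul_assoc, e_mul_e_mul_eq_neg_of_lt, e_mul_e_mul_self,
      e_mul_self, mul_neg]
    module
  j_mul_j := by
    simp (disch := decide) only [mul_assoc, e_mul_e_mul_eq_neg_of_lt, e_mul_e_mul_self,
      e_mul_self, mul_neg]
    module
  i_mul_j := by
    simp (disch := decide) only [mul_assoc, e_mul_e_mul_eq_neg_of_lt, e_mul_e_eq_neg_of_lt,
      e_mul_e_mul_self, mul_neg]
  j_mul_i := by
    simp (disch := decide) only [mul_assoc, e_mul_e_mul_eq_neg_of_lt, e_mul_e_eq_neg_of_lt,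
      e_mul_e_mul_self, mul_neg]
    module

def quatToCl3 : ℍ[ℝ] →ₐ[ℝ] Cl3 := evenQuaternionBasis.liftHom

lemma quatToCl3_apply (q : ℍ[ℝ]) :
    quatToCl3 q =
      q.re • 1 + q.imI • (e 0 * e 1) + q.imJ • (e 0 * e 2) + q.imK • (e 2 * e 1) := by
  rw [← Algebra.algebraMap_eq_smul_one]
  rfl

lemma quatToCl3_injective : Function.Injective quatToCl3 :=
  quatToCl3.toRingHom.injective

lemma quatToCl3_mem_evenOdd_zero (q : ℍ[ℝ]) : quatToCl3 q ∈ evenOdd Q3 0 := by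
  have he : ∀ i j, e i * e j ∈ evenOdd Q3 0 := fun i j => ι_mul_ι_mem_evenOdd_zero Q3 _ _
  rw [quatToCl3_apply]
  refine add_mem (add_mem (add_mem ?_ ?_) ?_) ?_ <;> refine Submodule.smul_mem _ _ ?_
  exacts [SetLike.one_mem_graded _, he 0 1, he 0 2, he 2 1]

/-- The geometric product `ab = a·b + a∧b` of two vectors, in the coordinates of
`evenQuaternionBasis`. -/
@[simps]
def vecProd {R : Type*} [CommRing R] (a b : Fin 3 → R) : ℍ[R] :=
  ⟨a 0 * b 0 + a 1 * b 1 + a 2 * b 2, a 0 * b 1 - a 1 * b 0, a 0 * b 2 - a 2 * b 0,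
    a 2 * b 1 - a 1 * b 2⟩

lemma ι_mul_ι_eq_quatToCl3_vecProd (a b : Fin 3 → ℝ) :
    ι Q3 a * ι Q3 b = quatToCl3 (vecProd a b) := by
  rw [ι_eq_sum_e, ι_eq_sum_e, quatToCl3_apply]
  simp (disch := decide) only [re_vecProd, imI_vecProd, imJ_vecProd, imK_vecProd, add_mul,
    mul_add, smul_mul_smul_comm, e_mul_self, e_mul_e_eq_neg_of_lt, smul_neg]
  module

@[simps]
def quatIntCast (q : ℍ[ℤ]) : ℍ[ℝ] := ⟨q.re, q.imI, q.imJ, q.imK⟩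

lemma quatIntCast_mul (p q : ℍ[ℤ]) : quatIntCast (p * q) = quatIntCast p * quatIntCast q := by
  apply Quaternion.ext <;> simp

lemma quatIntCast_two : quatIntCast 2 = 2 :=
  Quaternion.ext _ _ Int.cast_two Int.cast_zero Int.cast_zero Int.cast_zero

lemma quatIntCast_injective : Function.Injective quatIntCast := fun p q h => by
  rw [Quaternion.ext_iff] at h ⊢
  simpa using h

lemma quatIntCast_vecProd (u w : Fin 3 → ℤ) :
    quatIntCast (vecProd u w) = vecProd (fun i => (u i : ℝ)) (fun i => (w i : ℝ)) := by
  apply Quaternion.ext <;> simp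

lemma vecProd_smul_smul {R : Type*} [CommRing R] (c : R) (a b : Fin 3 → R) :
    vecProd (c • a) (c • b) = (c * c) • vecProd a b := by
  apply Quaternion.ext <;> simp <;> ring

def halfQuat (q : ℍ[ℤ]) : Cl3 := quatToCl3 ((2⁻¹ : ℝ) • quatIntCast q)

lemma halfQuat_injective : Function.Injective halfQuat :=
  quatToCl3_injective.comp <|
    (smul_right_injective ℍ[ℝ] (by norm_num)).comp quatIntCast_injective

lemma halfQuat_mul_halfQuat {p q s : ℍ[ℤ]} (h : p * q = 2 * s) :
    halfQuat p * halfQuat q = halfQuat s := by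
  rw [halfQuat, halfQuat, halfQuat, ← map_mul, smul_mul_smul_comm, ← quatIntCast_mul, h,
    quatIntCast_mul, quatIntCast_two, two_mul]
  congr 1
  module

lemma halfQuat_two : halfQuat 2 = 1 := by
  have two_eq : (2 : ℝ) • (1 : ℍ[ℝ]) = 2 := by rw [two_smul, one_add_one_eq_two]
  rw [halfQuat, quatIntCast_two, ← two_eq, smul_smul, inv_mul_cancel₀ two_ne_zero, one_smul,
    map_one]

lemma halfQuat_mem_evenOdd_zero (q : ℍ[ℤ]) : halfQuat q ∈ evenOdd Q3 0 :=
  quatToCl3_mem_evenOdd_zero _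

instance : DecidableEq ℍ[ℤ] := fun _ _ => decidable_of_iff _ Quaternion.ext_iff.symm

def rootVector (p : Fin 3 × Fin 3 × ℤˣ × ℤˣ) : Fin 3 → ℤ :=
  (p.2.2.1 : ℤ) • Pi.single p.1 1 + (p.2.2.2 : ℤ) • Pi.single p.2.1 1

def rootVectors : Finset (Fin 3 → ℤ) :=
  (Finset.univ.filter fun p : Fin 3 × Fin 3 × ℤˣ × ℤˣ => p.1 < p.2.1).image rootVector

def rootVersor (u : Fin 3 → ℤ) : Cl3 := ι Q3 ((√2)⁻¹ • fun i => (u i : ℝ))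

lemma intCast_rootVector (p : Fin 3 × Fin 3 × ℤˣ × ℤˣ) :
    (fun i => (rootVector p i : ℝ)) =
      ((p.2.2.1 : ℤ) : ℝ) • Pi.single p.1 1 + ((p.2.2.2 : ℤ) : ℝ) • Pi.single p.2.1 1 := by
  ext i
  simp only [rootVector, Pi.add_apply, Pi.smul_apply, Pi.single_apply, smul_eq_mul]
  split_ifs <;> simp

lemma A3rootVersors_eq_image : A3rootVersors = rootVersor '' rootVectors := by
  have units_cast {s : ℝ} (hs : s = 1 ∨ s = -1) : ∃ u : ℤˣ, ((u : ℤ) : ℝ) = s := by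
    rcases hs with rfl | rfl
    exacts [⟨1, by simp⟩, ⟨-1, by simp⟩]
  ext x
  simp only [A3rootVersors, rootVectors, Finset.coe_image, Finset.coe_filter, Set.mem_image,
    Set.mem_ofPred_eq, Finset.mem_univ, true_and]
  constructor
  · rintro ⟨i, j, hij, s, t, hs, ht, rfl⟩
    obtain ⟨u, rfl⟩ := units_cast hs
    obtain ⟨w, rfl⟩ := units_cast ht
    exact ⟨_, ⟨(i, j, u, w), hij, rfl⟩, by rw [rootVersor, intCast_rootVector]⟩
  · rintro ⟨_, ⟨⟨i, j, u, w⟩, hij, rfl⟩, rfl⟩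
    have unit_eq (u : ℤˣ) : ((u : ℤ) : ℝ) = 1 ∨ ((u : ℤ) : ℝ) = -1 := by
      rcases Int.units_eq_one_or u with rfl | rfl <;> simp
    exact ⟨i, j, hij, _, _, unit_eq u, unit_eq w, by rw [rootVersor, intCast_rootVector]⟩

lemma rootVersor_mul_rootVersor (u w : Fin 3 → ℤ) :
    rootVersor u * rootVersor w = halfQuat (vecProd u w) := by
  rw [rootVersor, rootVersor, ι_mul_ι_eq_quatToCl3_vecProd, vecProd_smul_smul, halfQuat,
    quatIntCast_vecProd, ← mul_inv, Real.mul_self_sqrt zero_le_two]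

/-- Twice the elements of Spin(A₃), in quaternion coordinates. -/
def doubledSpin : Finset ℍ[ℤ] := Finset.image₂ vecProd rootVectors rootVectors

lemma vecProd_self_of_mem_rootVectors : ∀ u ∈ rootVectors, vecProd u u = 2 := by
  decide +kernel

lemma two_mem_doubledSpin : (2 : ℍ[ℤ]) ∈ doubledSpin := by decide +kernel

lemma exists_mul_eq_two_mul_of_mem_doubledSpin :
    ∀ p ∈ doubledSpin, ∀ q ∈ doubledSpin, ∃ s ∈ doubledSpin, p * q = 2 * s := by
  decide +kernel

lemma card_doubledSpin : doubledSpin.card = 24 := by decide +kernel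

lemma e0_add_e1_mem_rootVectors : ![1, 1, 0] ∈ rootVectors := by decide +kernel

lemma rootVersor_mul_self {u : Fin 3 → ℤ} (hu : u ∈ rootVectors) :
    rootVersor u * rootVersor u = 1 := by
  rw [rootVersor_mul_rootVersor, vecProd_self_of_mem_rootVectors u hu, halfQuat_two]

lemma mul_self_of_mem_A3rootVersors : ∀ r ∈ A3rootVersors, r * r = 1 := by
  rw [A3rootVersors_eq_image]
  rintro _ ⟨u, hu, rfl⟩
  exact rootVersor_mul_self hu

def SpinA3 : Set Cl3 := halfQuat '' doubledSpin

lemma A3rootVersors_mul_self_eq : A3rootVersors * A3rootVersors = SpinA3 := by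
  rw [A3rootVersors_eq_image, ← Set.image2_mul, Set.image2_image_left, Set.image2_image_right,
    SpinA3, doubledSpin, Finset.coe_image₂, Set.image_image2]
  simp only [rootVersor_mul_rootVersor]

lemma SpinA3_mul_subset : SpinA3 * SpinA3 ⊆ SpinA3 := by
  rintro _ ⟨_, ⟨p, hp, rfl⟩, _, ⟨q, hq, rfl⟩, rfl⟩
  obtain ⟨s, hs, h⟩ := exists_mul_eq_two_mul_of_mem_doubledSpin p hp q hq
  exact ⟨s, hs, (halfQuat_mul_halfQuat h).symm⟩

lemma finite_SpinA3 : SpinA3.Finite := doubledSpin.finite_toSet.image _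

lemma ncard_SpinA3 : SpinA3.ncard = 24 := by
  rw [SpinA3, Set.ncard_image_of_injective _ halfQuat_injective, Set.ncard_coe_finset,
    card_doubledSpin]

lemma SpinA3_subset_evenOdd_zero : SpinA3 ⊆ evenOdd Q3 0 := by
  rintro _ ⟨q, -, rfl⟩
  exact halfQuat_mem_evenOdd_zero q

lemma rootVersor_mul_mem_evenOdd_one (u : Fin 3 → ℤ) {x : Cl3} (hx : x ∈ evenOdd Q3 0) :
    rootVersor u * x ∈ evenOdd Q3 1 := by
  have h := SetLike.mul_mem_graded (ι_mem_evenOdd_one Q3 ((√2)⁻¹ • fun i => (u i : ℝ))) hx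
  rw [add_zero] at h
  exact h

lemma ne_zero_of_mem_PinA3 {x : Cl3} (hx : x ∈ PinA3) : x ≠ 0 := by
  rintro rfl
  obtain ⟨y, -, h, -⟩ := Submonoid.exists_mul_eq_one_of_mul_self_eq_one
    mul_self_of_mem_A3rootVersors hx
  exact zero_ne_one (zero_mul y ▸ h)

lemma coe_PinA3_eq {u : Fin 3 → ℤ} (hu : u ∈ rootVectors) :
    (PinA3 : Set Cl3) = SpinA3 ∪ (rootVersor u * ·) '' SpinA3 := by
  have h := Submonoid.coe_closure_eq_union_image_mul_left
    (A3rootVersors_eq_image ▸ Set.mem_image_of_mem _ hu) mul_self_of_mem_A3rootVersors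
  rw [A3rootVersors_mul_self_eq] at h
  exact h ⟨2, two_mem_doubledSpin, halfQuat_two⟩ SpinA3_mul_subset

lemma rootVersor_mul_left_injective {u : Fin 3 → ℤ} (hu : u ∈ rootVectors) :
    Function.Injective (rootVersor u * ·) :=
  isLeftRegular_of_mul_eq_one (rootVersor_mul_self hu)

lemma rootVersor_mul_not_mem_evenOdd_zero {u : Fin 3 → ℤ} (hu : u ∈ rootVectors) {x : Cl3}
    (hx : x ∈ SpinA3) : rootVersor u * x ∉ evenOdd Q3 0 := by
  intro heven
  have hPin : rootVersor u * x ∈ (PinA3 : Set Cl3) := by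
    rw [coe_PinA3_eq hu]
    exact Or.inr ⟨x, hx, rfl⟩
  have hodd := rootVersor_mul_mem_evenOdd_one u (SpinA3_subset_evenOdd_zero hx)
  exact absurd (DirectSum.degree_eq_of_mem_mem (evenOdd Q3) heven hodd
    (ne_zero_of_mem_PinA3 hPin)) (by decide)

lemma ncard_PinA3 {u : Fin 3 → ℤ} (hu : u ∈ rootVectors) : (PinA3 : Set Cl3).ncard = 48 := by
  have hdisj : Disjoint SpinA3 ((rootVersor u * ·) '' SpinA3) := by
    rw [Set.disjoint_left]
    rintro _ hx ⟨y, hy, rfl⟩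
    exact rootVersor_mul_not_mem_evenOdd_zero hu hy (SpinA3_subset_evenOdd_zero hx)
  rw [coe_PinA3_eq hu, Set.ncard_union_eq hdisj finite_SpinA3 (finite_SpinA3.image _),
    Set.ncard_image_of_injective _ (rootVersor_mul_left_injective hu), ncard_SpinA3]

lemma setOf_mem_PinA3_and_mem_evenOdd_zero_eq {u : Fin 3 → ℤ} (hu : u ∈ rootVectors) :
    {x : Cl3 | x ∈ PinA3 ∧ x ∈ evenOdd Q3 0} = SpinA3 := by
  ext x
  rw [Set.mem_ofPred_eq, ← SetLike.mem_coe, coe_PinA3_eq hu]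
  constructor
  · rintro ⟨hx | ⟨y, hy, rfl⟩, heven⟩
    · exact hx
    · exact absurd heven (rootVersor_mul_not_mem_evenOdd_zero hu hy)
  · exact fun hx => ⟨Or.inl hx, SpinA3_subset_evenOdd_zero hx⟩

/-- Pin(A₃) has order 48, is a group, and its even subgroup
Spin(A₃) (the elements of even grade) has order 24. -/
theorem PinA3_order_48_spin_24 :
    (∀ x ∈ PinA3, ∃ y ∈ PinA3, x * y = 1 ∧ y * x = 1) ∧
    (PinA3 : Set Cl3).ncard = 48 ∧
    Set.ncard {x : Cl3 | x ∈ PinA3 ∧ x ∈ evenOdd Q3 0} = 24 :=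
  ⟨fun _ => Submonoid.exists_mul_eq_one_of_mul_self_eq_one mul_self_of_mem_A3rootVersors,
    ncard_PinA3 e0_add_e1_mem_rootVectors,
    setOf_mem_PinA3_and_mem_evenOdd_zero_eq e0_add_e1_mem_rootVectors ▸ ncard_SpinA3⟩
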